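/- Let X and Y be measurable spaces with countably generated σ-algebras, and let J be a probability measure on X × Y whose marginals P_X = J.map(fst) and P_Y = J.map(snd) are perfect. Then there exist Markov kernels f from Y to X × Y and g from X to X × Y such that P_Y.bind(f) = J, P_X.bind(g) = J, for all measurable A ⊆ X and B, C ⊆ Y one has ∫_C f(y)(A × B) dP_Y(y) = J(A × (B ∩ C)), for all measurable A, A' ⊆ X and B ⊆ Y one has ∫_{A'} g(x)(A × B) dP_X(x) = J((A ∩ A') × B), and consequently ∫_A g(x)(X × B) dP_X(x) = J(A × B) = ∫_B f(y)(A × Y) dP_Y(y) for all measurable A ⊆ X and B ⊆ Y. -/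

import Mathlib

open MeasureTheory ProbabilityTheory

/-- A measure `μ` on a measurable space `Z` is *perfect* if for every measurable
function `h : Z → ℝ` there exists a Borel set `E ⊆ range h` with
`μ (h ⁻¹' E) = μ univ`. -/
def IsPerfect {Z : Type*} [MeasurableSpace Z] (μ : Measure Z) : Prop :=
  ∀ h : Z → ℝ, Measurable h →
    ∃ E : Set ℝ, MeasurableSet E ∧ E ⊆ Set.range h ∧ μ (h ⁻¹' E) = μ Set.univ

/-! Choose a measurable `h : Y → ℝ` generating the σ-algebra of `Y`. The image of `J` on `X × ℝ`
has a conditional kernel because `ℝ` is standard Borel. Perfectness of the marginal on `Y` yields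
a Borel set `E ⊆ range h` of full measure, on which `h` has a measurable right inverse `s`; pushing
the conditional kernel forward along `s` disintegrates `J`, since `h` determines every measurable
set of `Y`. Doing this on both sides, `f y = κ y ⊗ δ_y` and `g x = δ_x ⊗ η x` are the graph kernels
of the two disintegrations. -/

open MeasurableSpace Set

lemma exists_comap_eq_real (β : Type*) [m : MeasurableSpace β] [CountablyGenerated β] :
    ∃ h : β → ℝ, MeasurableSpace.comap h inferInstance = m := by
  obtain ⟨e, he⟩ := exists_measurableEmbedding_real (ℕ → Bool)
  refine ⟨e ∘ mapNatBool β, ?_⟩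
  rw [← comap_comp, he.comap_eq]
  refine le_antisymm (measurable_iff_comap_le.1 (measurable_mapNatBool β)) ?_
  conv_lhs => rw [← generateFrom_natGeneratingSequence β]
  refine generateFrom_le ?_
  rintro - ⟨n, rfl⟩
  refine ⟨(fun y : ℕ → Bool ↦ y n) ⁻¹' {true},
    measurable_pi_apply n (measurableSet_singleton true), ?_⟩
  ext x
  simp [mapNatBool]

lemma exists_measurable_rightInvOn_of_comap_eq {β γ : Type*} [m : MeasurableSpace β] [Nonempty β]
    [MeasurableSpace γ] {h : β → γ} (hh : MeasurableSpace.comap h inferInstance = m)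
    {E : Set γ} (hE : MeasurableSet E) (hEh : E ⊆ range h) :
    ∃ s : γ → β, Measurable s ∧ RightInvOn s h E := by
  classical
  let x₀ : β := Classical.arbitrary β
  refine ⟨E.piecewise (Function.invFun h) fun _ ↦ x₀, ?_, fun r hr ↦ ?_⟩
  · have hcomp :
        h ∘ E.piecewise (Function.invFun h) (fun _ ↦ x₀) = E.piecewise id fun _ ↦ h x₀ := by
      ext r
      by_cases hr : r ∈ E
      · simp [hr, Function.invFun_eq (hEh hr)]
      · simp [hr]
    rw [measurable_iff_comap_le, ← hh, comap_comp, ← measurable_iff_comap_le, hcomp]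
    exact measurable_id.piecewise hE measurable_const
  · simp [hr, Function.invFun_eq (hEh hr)]

lemma MeasureTheory.Measure.ext_of_map_prodMap_eq {α β γ : Type*} [MeasurableSpace α]
    [mβ : MeasurableSpace β] [MeasurableSpace γ] {h : β → γ}
    (hh : MeasurableSpace.comap h inferInstance = mβ)
    {μ ν : Measure (α × β)} (heq : μ.map (Prod.map id h) = ν.map (Prod.map id h)) : μ = ν := by
  have hcomap : MeasurableSpace.comap (Prod.map (id : α → α) h) inferInstance =
      (inferInstance : MeasurableSpace (α × β)) := by
    rw [Prod.instMeasurableSpace, Prod.instMeasurableSpace, comap_prodMap,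
      MeasurableSpace.comap_id, hh]
  have hm : Measurable (Prod.map (id : α → α) h) := measurable_iff_comap_le.2 hcomap.le
  ext S hS
  obtain ⟨T, hT, rfl⟩ := hcomap.ge S hS
  rw [← Measure.map_apply hm hT, ← Measure.map_apply hm hT, heq]

lemma exists_isMarkovKernel_fst_compProd_eq {α β : Type*} [MeasurableSpace α] [MeasurableSpace β]
    [CountablyGenerated β] [Nonempty β] (μ : Measure (α × β)) [IsFiniteMeasure μ]
    (hμ : IsPerfect μ.snd) :
    ∃ κ : Kernel α β, IsMarkovKernel κ ∧ μ.fst ⊗ₘ κ = μ := by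
  obtain ⟨h, hh⟩ := exists_comap_eq_real β
  have hm : Measurable h := measurable_iff_comap_le.2 hh.le
  obtain ⟨E, hE, hEh, hEfull⟩ := hμ h hm
  obtain ⟨s, hs, hsh⟩ := exists_measurable_rightInvOn_of_comap_eq hh hE hEh
  set ρ := μ.map (Prod.map id h)
  have hρfst : ρ.fst = μ.fst := by
    rw [Measure.fst, Measure.map_map measurable_fst (measurable_id.prodMap hm)]
    rfl
  have hρE : ∀ᵐ a ∂ρ.fst, ∀ᵐ r ∂ρ.condKernel a, r ∈ E := by
    have hμE : ∀ᵐ b ∂μ.snd, h b ∈ E := (ae_mem_iff_measure_eq (hm hE).nullMeasurableSet).2 hEfull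
    have : ∀ᵐ p ∂ρ, p.2 ∈ E := by
      rw [ae_map_iff (measurable_id.prodMap hm).aemeasurable (measurable_snd hE)]
      exact ae_of_ae_map measurable_snd.aemeasurable hμE
    rw [← ρ.disintegrate ρ.condKernel] at this
    exact Measure.ae_ae_of_ae_compProd this
  have hκ : ρ.condKernel.map (h ∘ s) =ᵐ[ρ.fst] ρ.condKernel := by
    filter_upwards [hρE] with a ha
    have hhs : h ∘ s =ᵐ[ρ.condKernel a] id := ha.mono hsh
    rw [Kernel.map_apply _ (hm.comp hs), Measure.map_congr hhs, Measure.map_id]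
  refine ⟨ρ.condKernel.map s, Kernel.IsMarkovKernel.map _ hs, Measure.ext_of_map_prodMap_eq hh ?_⟩
  calc (μ.fst ⊗ₘ ρ.condKernel.map s).map (Prod.map id h)
      = ρ.fst ⊗ₘ ρ.condKernel.map (h ∘ s) := by
        rw [← Measure.compProd_map hm, Kernel.map_comp_right _ hs hm, hρfst]
    _ = ρ := by rw [Measure.compProd_congr hκ, ρ.disintegrate ρ.condKernel]

lemma setLIntegral_id_prod_apply_prod {α β : Type*} [MeasurableSpace α] [MeasurableSpace β]
    (μ : Measure α) [SFinite μ] (κ : Kernel α β) [IsSFiniteKernel κ] {A A' : Set α} {B : Set β}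
    (hA : MeasurableSet A) (hA' : MeasurableSet A') (hB : MeasurableSet B) :
    ∫⁻ a in A', (Kernel.id ×ₖ κ) a (A ×ˢ B) ∂μ = (μ ⊗ₘ κ) ((A ∩ A') ×ˢ B) := by
  have hindicator : ∀ a, (Kernel.id ×ₖ κ) a (A ×ˢ B) = A.indicator (κ · B) a := by
    intro a
    rw [Kernel.prod_apply_prod, Kernel.id_apply, Measure.dirac_apply' a hA]
    by_cases ha : a ∈ A <;> simp [ha]
  simp_rw [hindicator]
  rw [setLIntegral_indicator hA, Measure.compProd_apply_prod (hA.inter hA') hB]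

theorem stmt_12 {X Y : Type*} [MeasurableSpace X] [MeasurableSpace Y]
    [MeasurableSpace.CountablyGenerated X] [MeasurableSpace.CountablyGenerated Y]
    (J : Measure (X × Y)) [IsProbabilityMeasure J]
    (hPX : IsPerfect (J.map Prod.fst)) (hPY : IsPerfect (J.map Prod.snd)) :
    ∃ (f : Kernel Y (X × Y)) (g : Kernel X (X × Y)),
      IsMarkovKernel f ∧ IsMarkovKernel g ∧
      (J.map Prod.snd).bind (fun y => f y) = J ∧
      (J.map Prod.fst).bind (fun x => g x) = J ∧
      (∀ (A : Set X) (B C : Set Y), MeasurableSet A → MeasurableSet B → MeasurableSet C →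
        ∫⁻ y in C, f y (A ×ˢ B) ∂(J.map Prod.snd) = J (A ×ˢ (B ∩ C))) ∧
      (∀ (A A' : Set X) (B : Set Y), MeasurableSet A → MeasurableSet A' → MeasurableSet B →
        ∫⁻ x in A', g x (A ×ˢ B) ∂(J.map Prod.fst) = J ((A ∩ A') ×ˢ B)) ∧
      (∀ (A : Set X) (B : Set Y), MeasurableSet A → MeasurableSet B →
        ∫⁻ x in A, g x (Set.univ ×ˢ B) ∂(J.map Prod.fst) = J (A ×ˢ B) ∧
        J (A ×ˢ B) = ∫⁻ y in B, f y (A ×ˢ Set.univ) ∂(J.map Prod.snd)) := by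
  obtain ⟨_, _⟩ := nonempty_prod.1 (nonempty_of_isProbabilityMeasure J)
  obtain ⟨κg, _, hκg⟩ := exists_isMarkovKernel_fst_compProd_eq J hPY
  obtain ⟨κf, _, hκf⟩ := exists_isMarkovKernel_fst_compProd_eq (J.map Prod.swap)
    (by rwa [Measure.snd_map_swap])
  rw [Measure.fst_map_swap] at hκf
  have hf_rect : ∀ (A : Set X) (B C : Set Y), MeasurableSet A → MeasurableSet B →
      MeasurableSet C → ∫⁻ y in C, (Kernel.id ×ₖ κf).map Prod.swap y (A ×ˢ B) ∂J.snd =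
        J (A ×ˢ (B ∩ C)) := by
    intro A B C hA hB hC
    simp_rw [Kernel.map_apply' _ measurable_swap _ (hA.prod hB), preimage_swap_prod]
    rw [setLIntegral_id_prod_apply_prod _ _ hB hC hA, hκf,
      Measure.map_apply measurable_swap ((hB.inter hC).prod hA), preimage_swap_prod]
  have hg_rect : ∀ (A A' : Set X) (B : Set Y), MeasurableSet A → MeasurableSet A' →
      MeasurableSet B → ∫⁻ x in A', (Kernel.id ×ₖ κg) x (A ×ˢ B) ∂J.fst = J ((A ∩ A') ×ˢ B) :=
    fun A A' B hA hA' hB ↦ by rw [setLIntegral_id_prod_apply_prod _ _ hA hA' hB, hκg]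
  refine ⟨(Kernel.id ×ₖ κf).map Prod.swap, Kernel.id ×ₖ κg,
    Kernel.IsMarkovKernel.map _ measurable_swap, inferInstance, ?_, ?_, hf_rect, hg_rect,
    fun A B hA hB ↦ ⟨?_, ?_⟩⟩
  · rw [← Measure.map_comp _ _ measurable_swap, ← Measure.compProd_eq_comp_prod]
    change (J.snd ⊗ₘ κf).map Prod.swap = J
    rw [hκf, Measure.map_map measurable_swap measurable_swap, Prod.swap_swap_eq, Measure.map_id]
  · rw [← Measure.compProd_eq_comp_prod]
    exact hκg
  · have := hg_rect univ A B .univ hA hB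
    rwa [univ_inter] at this
  · have := hf_rect A univ B hA .univ hB
    rw [univ_inter] at this
    exact this.symm
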